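/- Let t be a Lie algebra automorphism of L such that t(h) = h for every diagonal matrix h ∈ L. Then there exist nonzero scalars α, β, γ, δ ∈ K with t(b_{2,1}) = α·b_{2,1}, t(b_{3,2}) = β·b_{3,2}, t(b_{4,3}) = γ·b_{4,3}, t(c_{3,4}) = δ·c_{3,4}, and moreover t(b_{3,1}) = αβ·b_{3,1}, t(b_{4,1}) = αβγ·b_{4,1}, t(b_{4,2}) = βγ·b_{4,2}, t(c_{4,1}) = αβδ·c_{4,1}, t(c_{4,2}) = βδ·c_{4,2}, t(c_{2,1}) = αβ²γδ·c_{2,1}, t(c_{3,1}) = αβγδ·c_{3,1}, t(c_{2,3}) = βγδ·c_{2,3}; furthermore, whenever t(b_{i,j}) = λ·b_{i,j} one has t(b_{j,i}) = λ⁻¹·b_{j,i}, and whenever t(c_{i,j}) = λ·c_{i,j} one has t(d_{i,j}) = λ⁻¹·d_{i,j}. (The maximal torus of Aut(L) fixing the Cartan subalgebra pointwise acts diagonally on the root vectors with the stated eigenvalue pattern.) -/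

import Mathlib

/-!
The diagonal matrix `H = diag(1, 4, 16, 64, -1, -4, -16, -64)` lies in `L`, and its weights
separate the root vectors `E_pq = e_pq - e_{q+4,p+4}`: on `L`, the eigenspace of `ad H` for the
eigenvalue `w_p - w_q` is the line through `E_pq`. An automorphism fixing `H` commutes with
`ad H`, so it scales every root vector. The relations between the scalars come from the brackets
`[E_pq, E_qv] = E_pv`, and the inverse eigenvalues from `[E_pq, E_qp]` being a nonzero diagonal
matrix, which the automorphism fixes.
-/

/-- The `8 × 8` matrix `C = [[0, I₄],[I₄, 0]]`: `C i j = 1` iff `|i − j| = 4`. -/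
def Cmat (K : Type*) [Field K] : Matrix (Fin 8) (Fin 8) K :=
  Matrix.of fun i j => if i.val + 4 = j.val ∨ j.val + 4 = i.val then 1 else 0

/-- The Lie algebra `L = {x ∈ M₈(K) : xᵀC = −Cx}` of type `D₄`, as a subspace of `M₈(K)`. -/
noncomputable def Lsub (K : Type*) [Field K] : Submodule K (Matrix (Fin 8) (Fin 8) K) where
  carrier := {x | x.transpose * Cmat K = -(Cmat K * x)}
  add_mem' := by
    intro a b ha hb
    simp only [Set.mem_setOf_eq] at *
    rw [Matrix.transpose_add, Matrix.add_mul, ha, hb, Matrix.mul_add, neg_add]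
  zero_mem' := by
    simp only [Set.mem_setOf_eq, Matrix.transpose_zero, Matrix.zero_mul, Matrix.mul_zero,
      neg_zero]
  smul_mem' := by
    intro c a ha
    simp only [Set.mem_setOf_eq] at *
    rw [Matrix.transpose_smul, smul_mul_assoc, ha, mul_smul_comm, smul_neg]

/-- The embedding `{1,…,4} → {1,…,8}`, `i ↦ i`. -/
def lo (i : Fin 4) : Fin 8 := ⟨i.val, by omega⟩

/-- The embedding `{1,…,4} → {1,…,8}`, `i ↦ i + 4`. -/
def hi (i : Fin 4) : Fin 8 := ⟨i.val + 4, by omega⟩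

/-- The elementary matrix `e_{k,l}`. -/
def elemMat (K : Type*) [Field K] (k l : Fin 8) : Matrix (Fin 8) (Fin 8) K :=
  Matrix.single k l 1

/-- `h_i = e_{i,i} − e_{i+4,i+4}`. -/
def hmat (K : Type*) [Field K] (i : Fin 4) : Matrix (Fin 8) (Fin 8) K :=
  elemMat K (lo i) (lo i) - elemMat K (hi i) (hi i)

/-- `b_{i,j} = e_{j,i} − e_{i+4,j+4}`. -/
def bmat (K : Type*) [Field K] (i j : Fin 4) : Matrix (Fin 8) (Fin 8) K :=
  elemMat K (lo j) (lo i) - elemMat K (hi i) (hi j)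

/-- `c_{i,j} = e_{j,i+4} − e_{i,j+4}`. -/
def cmat (K : Type*) [Field K] (i j : Fin 4) : Matrix (Fin 8) (Fin 8) K :=
  elemMat K (lo j) (hi i) - elemMat K (lo i) (hi j)

/-- `d_{i,j} = e_{i+4,j} − e_{j+4,i}`. -/
def dmat (K : Type*) [Field K] (i j : Fin 4) : Matrix (Fin 8) (Fin 8) K :=
  elemMat K (hi i) (lo j) - elemMat K (hi j) (lo i)

/-- `EigOn t m s` says that the automorphism `t` of `L` sends the element of `L` whose
underlying matrix is `m` to `s • m`. -/
def EigOn {K : Type*} [Field K] (t : ↥(Lsub K) ≃ₗ[K] ↥(Lsub K))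
    (m : Matrix (Fin 8) (Fin 8) K) (s : K) : Prop :=
  ∀ x : ↥(Lsub K), (x : Matrix (Fin 8) (Fin 8) K) = m →
    (t x : Matrix (Fin 8) (Fin 8) K) = s • m

open Matrix

namespace D4

variable {K : Type*} [Field K]

lemma add_four_add_four (k : Fin 8) : k + 4 + 4 = k := by revert k; decide

lemma eq_add_four_comm {a b : Fin 8} : a = b + 4 ↔ b = a + 4 := by revert a b; decide

lemma add_four_eq_comm {a b : Fin 8} : a + 4 = b ↔ b + 4 = a := by revert a b; decide

lemma Cmat_apply (a b : Fin 8) : Cmat K a b = if a = b + 4 then 1 else 0 := by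
  have h : (a.val + 4 = b.val ∨ b.val + 4 = a.val) ↔ a = b + 4 := by revert a b; decide
  simp only [Cmat, of_apply, h]

lemma mem_Lsub_iff {x : Matrix (Fin 8) (Fin 8) K} :
    x ∈ Lsub K ↔ ∀ a b, x a b = -x (b + 4) (a + 4) := by
  have hC : ∀ a b, (xᵀ * Cmat K) a b = x (b + 4) a ∧ (Cmat K * x) a b = x (a + 4) b := by
    intro a b
    simp [mul_apply, Cmat_apply, eq_add_four_comm (a := a)]
  change xᵀ * Cmat K = -(Cmat K * x) ↔ _
  rw [← Matrix.ext_iff]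
  simp only [Matrix.neg_apply, hC]
  constructor
  · intro h a b
    simpa [add_four_add_four] using h b (a + 4)
  · intro h a b
    simpa [add_four_add_four] using h (b + 4) a

/-- `k + 4` is computed in `Fin 8`, so `k ↦ k + 4` exchanges `i` and `i + 4`. -/
def rootVec (K : Type*) [Field K] (p q : Fin 8) : Matrix (Fin 8) (Fin 8) K :=
  elemMat K p q - elemMat K (q + 4) (p + 4)

lemma rootVec_apply (p q a b : Fin 8) :
    rootVec K p q a b =
      (if p = a ∧ q = b then 1 else 0) - (if q + 4 = a ∧ p + 4 = b then 1 else 0) := by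
  simp only [rootVec, elemMat, Matrix.sub_apply, Matrix.single_apply]

lemma rootVec_mem (p q : Fin 8) : rootVec K p q ∈ Lsub K := by
  rw [mem_Lsub_iff]
  intro a b
  simp only [rootVec_apply, eq_add_four_comm (b := a), eq_add_four_comm (b := b)]
  split_ifs <;> grind

lemma lo_add_four (i : Fin 4) : lo i + 4 = hi i := by revert i; decide

lemma hi_add_four (i : Fin 4) : hi i + 4 = lo i := by revert i; decide

lemma bmat_eq_rootVec (i j : Fin 4) : bmat K i j = rootVec K (lo j) (lo i) := by
  rw [bmat, rootVec, lo_add_four, lo_add_four]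

lemma cmat_eq_rootVec (i j : Fin 4) : cmat K i j = rootVec K (lo j) (hi i) := by
  rw [cmat, rootVec, lo_add_four, hi_add_four]

lemma dmat_eq_rootVec (i j : Fin 4) : dmat K i j = rootVec K (hi i) (lo j) := by
  rw [dmat, rootVec, lo_add_four, hi_add_four]

lemma elemMat_mul_elemMat (p q u v : Fin 8) :
    elemMat K p q * elemMat K u v = if q = u then elemMat K p v else 0 := by
  split_ifs with h
  · subst h; simp [elemMat]
  · simp [elemMat, h]

lemma rootVec_commutator (p q u v : Fin 8) :
    rootVec K p q * rootVec K u v - rootVec K u v * rootVec K p q =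
      (if q = u then rootVec K p v else 0) - (if q = v + 4 then rootVec K p (u + 4) else 0)
        - (if p + 4 = u then rootVec K (q + 4) v else 0)
        - (if p = v then rootVec K u q else 0) := by
  simp only [rootVec, sub_mul, mul_sub, elemMat_mul_elemMat, add_left_inj,
    add_four_eq_comm (b := p), eq_add_four_comm (b := q), eq_comm (a := v)]
  split_ifs <;> subst_vars <;> (try simp only [add_four_add_four, add_left_inj] at *) <;>
    subst_vars <;> first | abel1 | simp_all

lemma rootVec_swap (p q : Fin 8) : rootVec K (q + 4) (p + 4) = -rootVec K p q := by
  rw [rootVec, rootVec, add_four_add_four, add_four_add_four, neg_sub]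

lemma rootVec_ne_zero {p q : Fin 8} (hpq : p ≠ q + 4) : rootVec K p q ≠ 0 := by
  intro h
  have := congrFun (congrFun h p) q
  simp [rootVec_apply, hpq.symm] at this

lemma rootVec_self_apply_of_ne (p : Fin 8) {a b : Fin 8} (hab : a ≠ b) :
    rootVec K p p a b = 0 := by
  rw [rootVec_apply, if_neg fun h => hab (h.1.symm.trans h.2),
    if_neg fun h => hab (h.1.symm.trans h.2), sub_zero]

lemma commutator_diagonal_apply {n R : Type*} [Fintype n] [DecidableEq n] [CommRing R]
    (d : n → R) (M : Matrix n n R) (a b : n) :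
    (diagonal d * M - M * diagonal d) a b = (d a - d b) * M a b := by
  rw [Matrix.sub_apply, diagonal_mul, mul_diagonal]
  ring

def weight : Fin 8 → ℤ := ![1, 4, 16, 64, -1, -4, -16, -64]

lemma weight_add_four (k : Fin 8) : weight (k + 4) = -weight k := by revert k; decide

lemma eq_of_weight_sub_eq : ∀ p q a b : Fin 8, p ≠ q → p ≠ q + 4 →
    weight a - weight b = weight p - weight q → a = p ∧ b = q ∨ a = q + 4 ∧ b = p + 4 := by
  decide

def weightDiag (K : Type*) [Field K] : Matrix (Fin 8) (Fin 8) K :=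
  diagonal fun a => (weight a : K)

lemma weightDiag_mem : weightDiag K ∈ Lsub K := by
  rw [mem_Lsub_iff]
  intro a b
  by_cases hab : a = b
  · simp [weightDiag, hab, weight_add_four]
  · have : b + 4 ≠ a + 4 := fun h => hab (add_right_cancel h).symm
    simp [weightDiag, hab, this]

lemma commutator_weightDiag_rootVec (p q : Fin 8) :
    weightDiag K * rootVec K p q - rootVec K p q * weightDiag K =
      ((weight p - weight q : ℤ) : K) • rootVec K p q := by
  ext a b
  rw [weightDiag, commutator_diagonal_apply, Matrix.smul_apply, smul_eq_mul, rootVec_apply]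
  split_ifs with h₁ h₂ h₂
  all_goals
    (try obtain ⟨rfl, rfl⟩ := h₁); (try obtain ⟨rfl, rfl⟩ := h₂)
    simp [weight_add_four, neg_add_eq_sub]

lemma eq_smul_rootVec_of_commutator_weightDiag [CharZero K] {Y : Matrix (Fin 8) (Fin 8) K}
    {p q : Fin 8} (hY : Y ∈ Lsub K) (hpq : p ≠ q) (hpq' : p ≠ q + 4)
    (h : weightDiag K * Y - Y * weightDiag K = ((weight p - weight q : ℤ) : K) • Y) :
    Y = Y p q • rootVec K p q := by
  have hzero : ∀ a b, ¬(a = p ∧ b = q ∨ a = q + 4 ∧ b = p + 4) → Y a b = 0 := by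
    intro a b hab
    have hw : ((weight a - weight b : ℤ) : K) - ((weight p - weight q : ℤ) : K) ≠ 0 :=
      sub_ne_zero.mpr (Int.cast_injective.ne (mt (eq_of_weight_sub_eq p q a b hpq hpq') hab))
    have hab' := congrFun (congrFun h a) b
    rw [weightDiag, commutator_diagonal_apply, Matrix.smul_apply, smul_eq_mul] at hab'
    push_cast at hw hab'
    exact (mul_eq_zero.mp (by rw [sub_mul, hab', sub_self])).resolve_left hw
  ext a b
  rw [Matrix.smul_apply, smul_eq_mul, rootVec_apply]
  by_cases h₁ : a = p ∧ b = q
  · obtain ⟨rfl, rfl⟩ := h₁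
    simp [Ne.symm hpq']
  by_cases h₂ : a = q + 4 ∧ b = p + 4
  · obtain ⟨rfl, rfl⟩ := h₂
    rw [mem_Lsub_iff.mp hY (q + 4), add_four_add_four, add_four_add_four]
    simp [hpq']
  · rw [hzero a b (by tauto), if_neg fun h => h₁ ⟨h.1.symm, h.2.symm⟩,
      if_neg fun h => h₂ ⟨h.1.symm, h.2.symm⟩, sub_zero, mul_zero]

def PreservesCommutator (t : ↥(Lsub K) ≃ₗ[K] ↥(Lsub K)) : Prop :=
  ∀ x y z : ↥(Lsub K),
    (z : Matrix (Fin 8) (Fin 8) K) = (x : Matrix (Fin 8) (Fin 8) K) * y - y * x →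
      (t z : Matrix (Fin 8) (Fin 8) K) = (t x : Matrix (Fin 8) (Fin 8) K) * t y - t y * t x

def FixesDiagonal (t : ↥(Lsub K) ≃ₗ[K] ↥(Lsub K)) : Prop :=
  ∀ h : ↥(Lsub K),
    (∀ i j : Fin 8, i ≠ j → (h : Matrix (Fin 8) (Fin 8) K) i j = 0) → t h = h

section Automorphism

variable {t : ↥(Lsub K) ≃ₗ[K] ↥(Lsub K)}

lemma eigOn_of_apply_eq (x : ↥(Lsub K)) {s : K}
    (h : (t x : Matrix (Fin 8) (Fin 8) K) = s • (x : Matrix (Fin 8) (Fin 8) K)) :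
    EigOn t x s := by
  intro y hy
  rwa [Subtype.ext hy]

lemma _root_.EigOn.unique {m : Matrix (Fin 8) (Fin 8) K} {a b : K} (hm : m ∈ Lsub K)
    (hm0 : m ≠ 0) (ha : EigOn t m a) (hb : EigOn t m b) : a = b :=
  smul_left_injective K hm0 ((ha ⟨m, hm⟩ rfl).symm.trans (hb ⟨m, hm⟩ rfl))

lemma _root_.EigOn.neg {m : Matrix (Fin 8) (Fin 8) K} {s : K} (h : EigOn t m s) :
    EigOn t (-m) s := by
  intro x hx
  have := h (-x) (by rw [Submodule.coe_neg, hx, neg_neg])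
  rw [map_neg, Submodule.coe_neg] at this
  rw [smul_neg, ← this, neg_neg]

lemma _root_.EigOn.commutator {mx my mz : Matrix (Fin 8) (Fin 8) K} {a b : K}
    (ht : PreservesCommutator t) (hx : EigOn t mx a) (hy : EigOn t my b)
    (hmx : mx ∈ Lsub K) (hmy : my ∈ Lsub K) (h : mx * my - my * mx = mz) :
    EigOn t mz (a * b) := by
  intro z hz
  rw [ht ⟨mx, hmx⟩ ⟨my, hmy⟩ z (hz.trans h.symm), hx _ rfl, hy _ rfl, smul_mul_smul_comm,
    smul_mul_smul_comm, mul_comm b a, ← smul_sub, h]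

lemma eigOn_one_of_diagonal (hd : FixesDiagonal t) {m : Matrix (Fin 8) (Fin 8) K}
    (hm : m ∈ Lsub K) (hdiag : ∀ i j : Fin 8, i ≠ j → m i j = 0) : EigOn t m 1 :=
  eigOn_of_apply_eq ⟨m, hm⟩ (by rw [hd ⟨m, hm⟩ hdiag, one_smul])

lemma _root_.EigOn.rootVec_swap {p q : Fin 8} {s : K} (h : EigOn t (rootVec K p q) s) :
    EigOn t (rootVec K (q + 4) (p + 4)) s := by
  rw [D4.rootVec_swap]
  exact h.neg

lemma _root_.EigOn.rootVec_mul (ht : PreservesCommutator t) {p q v : Fin 8} {a b : K}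
    (hx : EigOn t (rootVec K p q) a) (hy : EigOn t (rootVec K q v) b)
    (h₁ : q ≠ v + 4) (h₂ : p + 4 ≠ q) (h₃ : p ≠ v) : EigOn t (rootVec K p v) (a * b) :=
  hx.commutator ht hy (rootVec_mem p q) (rootVec_mem q v) (by
    rw [rootVec_commutator]
    simp [h₁, h₂, h₃])

variable [CharZero K]

lemma exists_eigOn_rootVec (ht : PreservesCommutator t) (hd : FixesDiagonal t) (p q : Fin 8)
    (hpq : p ≠ q) (hpq' : p ≠ q + 4) : ∃ s : K, s ≠ 0 ∧ EigOn t (rootVec K p q) s := by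
  set H : ↥(Lsub K) := ⟨weightDiag K, weightDiag_mem⟩
  set x : ↥(Lsub K) := ⟨rootVec K p q, rootVec_mem p q⟩
  set r : K := ((weight p - weight q : ℤ) : K)
  have htH : t H = H := hd H fun i j hij => diagonal_apply_ne _ hij
  have htx : (t x : Matrix (Fin 8) (Fin 8) K) =
      (t x : Matrix (Fin 8) (Fin 8) K) p q • rootVec K p q := by
    refine eq_smul_rootVec_of_commutator_weightDiag (t x).2 hpq hpq' ?_
    have := ht H x (r • x) (commutator_weightDiag_rootVec p q).symm
    rw [htH, map_smul, Submodule.coe_smul] at this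
    exact this.symm
  refine ⟨(t x : Matrix (Fin 8) (Fin 8) K) p q, fun h0 => rootVec_ne_zero (K := K) hpq' ?_,
    eigOn_of_apply_eq x htx⟩
  have htx0 : t x = 0 := Subtype.ext (by rw [htx, h0, zero_smul]; rfl)
  exact congrArg Subtype.val ((LinearEquiv.map_eq_zero_iff t).mp htx0)

lemma _root_.EigOn.rootVec_inv (ht : PreservesCommutator t) (hd : FixesDiagonal t)
    {p q : Fin 8} {s : K} (hpq : p ≠ q) (hpq' : p ≠ q + 4) (h : EigOn t (rootVec K p q) s) :
    EigOn t (rootVec K q p) s⁻¹ := by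
  have hqp' : q ≠ p + 4 := fun h => hpq' (eq_add_four_comm.mp h)
  obtain ⟨s', -, hs'⟩ := exists_eigOn_rootVec ht hd q p hpq.symm hqp'
  have hD : rootVec K p p - rootVec K q q ∈ Lsub K := sub_mem (rootVec_mem p p) (rootVec_mem q q)
  have hD0 : rootVec K p p - rootVec K q q ≠ 0 := by
    intro h0
    have := congrFun (congrFun h0 p) p
    simp [rootVec_apply, hpq.symm, hpq'.symm] at this
  have hss' : s * s' = 1 := by
    refine (h.commutator ht hs' (rootVec_mem p q) (rootVec_mem q p) ?_).unique hD hD0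
      (eigOn_one_of_diagonal hd hD fun a b hab => ?_)
    · rw [rootVec_commutator]
      simp [hqp', hqp'.symm]
    · rw [Matrix.sub_apply, rootVec_self_apply_of_ne p hab, rootVec_self_apply_of_ne q hab,
        sub_zero]
  rwa [eq_inv_of_mul_eq_one_right hss'] at hs'

end Automorphism

end D4

open D4

/-- Any automorphism of `L` fixing the Cartan subalgebra of diagonal matrices pointwise
acts diagonally on the root vectors with eigenvalues
`α, β, γ, δ, αβ, αβγ, βγ, αβδ, βδ, αβ²γδ, αβγδ, βγδ` on the positive root vectors and
inverse eigenvalues on the opposite root vectors. -/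
theorem torus_eigenvalue_pattern (K : Type*) [Field K] [CharZero K]
    (t : ↥(Lsub K) ≃ₗ[K] ↥(Lsub K))
    (htbracket : ∀ x y z : ↥(Lsub K),
      (z : Matrix (Fin 8) (Fin 8) K)
          = (x : Matrix (Fin 8) (Fin 8) K) * (y : Matrix (Fin 8) (Fin 8) K)
            - (y : Matrix (Fin 8) (Fin 8) K) * (x : Matrix (Fin 8) (Fin 8) K) →
      (t z : Matrix (Fin 8) (Fin 8) K)
          = (t x : Matrix (Fin 8) (Fin 8) K) * (t y : Matrix (Fin 8) (Fin 8) K)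
            - (t y : Matrix (Fin 8) (Fin 8) K) * (t x : Matrix (Fin 8) (Fin 8) K))
    (htdiag : ∀ h : ↥(Lsub K),
      (∀ i j : Fin 8, i ≠ j → (h : Matrix (Fin 8) (Fin 8) K) i j = 0) → t h = h) :
    ∃ α β γ δ : K, α ≠ 0 ∧ β ≠ 0 ∧ γ ≠ 0 ∧ δ ≠ 0 ∧
      EigOn t (bmat K 1 0) α ∧
      EigOn t (bmat K 2 1) β ∧
      EigOn t (bmat K 3 2) γ ∧
      EigOn t (cmat K 2 3) δ ∧
      EigOn t (bmat K 2 0) (α * β) ∧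
      EigOn t (bmat K 3 0) (α * β * γ) ∧
      EigOn t (bmat K 3 1) (β * γ) ∧
      EigOn t (cmat K 3 0) (α * β * δ) ∧
      EigOn t (cmat K 3 1) (β * δ) ∧
      EigOn t (cmat K 1 0) (α * β ^ 2 * γ * δ) ∧
      EigOn t (cmat K 2 0) (α * β * γ * δ) ∧
      EigOn t (cmat K 1 2) (β * γ * δ) ∧
      (∀ i j : Fin 4, i ≠ j → ∀ lam : K,
        (EigOn t (bmat K i j) lam → EigOn t (bmat K j i) lam⁻¹) ∧
        (EigOn t (cmat K i j) lam → EigOn t (dmat K i j) lam⁻¹)) := by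
  have ht : PreservesCommutator t := htbracket
  obtain ⟨α, hα0, hα⟩ := exists_eigOn_rootVec ht htdiag 0 1 (by decide) (by decide)
  obtain ⟨β, hβ0, hβ⟩ := exists_eigOn_rootVec ht htdiag 1 2 (by decide) (by decide)
  obtain ⟨γ, hγ0, hγ⟩ := exists_eigOn_rootVec ht htdiag 2 3 (by decide) (by decide)
  obtain ⟨δ, hδ0, hδ⟩ := exists_eigOn_rootVec ht htdiag 3 6 (by decide) (by decide)
  have hαβ := hα.rootVec_mul ht hβ (by decide) (by decide) (by decide)
  have hβγ := hβ.rootVec_mul ht hγ (by decide) (by decide) (by decide)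
  have hβδ := hβ.rootVec_mul ht hδ.rootVec_swap (by decide) (by decide) (by decide)
  have hβγδ := hβγ.rootVec_mul ht hδ (by decide) (by decide) (by decide)
  have hαβγ := hαβ.rootVec_mul ht hγ (by decide) (by decide) (by decide)
  refine ⟨α, β, γ, δ, hα0, hβ0, hγ0, hδ0, hα, hβ, hγ, hδ, hαβ, hαβγ, hβγ,
    hαβ.rootVec_mul ht hδ.rootVec_swap (by decide) (by decide) (by decide), hβδ, ?_,
    hαβγ.rootVec_mul ht hδ (by decide) (by decide) (by decide), hβγδ.rootVec_swap, ?_⟩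
  · have h := hαβ.rootVec_mul ht hβγδ.rootVec_swap (by decide) (by decide) (by decide)
    rwa [show α * β * (β * γ * δ) = α * β ^ 2 * γ * δ by ring] at h
  · intro i j hij lam
    obtain ⟨hb, hb', hc, hc'⟩ :
        lo j ≠ lo i ∧ lo j ≠ lo i + 4 ∧ lo j ≠ hi i ∧ lo j ≠ hi i + 4 := by
      revert i j; decide
    rw [bmat_eq_rootVec, bmat_eq_rootVec, cmat_eq_rootVec, dmat_eq_rootVec]
    exact ⟨EigOn.rootVec_inv ht htdiag hb hb', EigOn.rootVec_inv ht htdiag hc hc'⟩
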